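/- arXiv:2106.10503 — 2 statements merged into one kernel-verified Lean document; each statement's English description precedes it below -/
import Mathlib

section
/- For all a ∈ (0,1] and b > 0, the negative first moment of the RSB distribution is infinite: ∫₀^∞ u^{-1} · π_RSB(u; a, b) du = ∞. -/
/-! For `0 < u < 1` we have `0 < log (1 + u) ≤ 1`, so when `a ≤ 1` every factor of `π_RSB(u; a, b)`
is bounded below and the density stays above `2^{-(a+b)-1} / B(a,b) > 0` near `0`. The integrand
`u⁻¹ π_RSB(u; a, b)` therefore dominates a positive multiple of `u⁻¹`, which is not integrable
at `0`. -/

open MeasureTheory Set Filter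

/-- The Beta function `B(a,b) = Γ(a)Γ(b)/Γ(a+b)`. -/
noncomputable def betaFn (a b : ℝ) : ℝ :=
  Real.Gamma a * Real.Gamma b / Real.Gamma (a + b)

/-- The rescaled beta (RSB) density
`π_RSB(u; a, b) = (1/B(a,b)) (log(1+u))^{a-1} (1+u)^{-1} (1+log(1+u))^{-(a+b)}`. -/
noncomputable def piRSB (a b u : ℝ) : ℝ :=
  (1 / betaFn a b) * (Real.log (1 + u)) ^ (a - 1) * (1 + u)⁻¹ *
    (1 + Real.log (1 + u)) ^ (-(a + b))

lemma lintegral_ofReal_inv_Ioo_zero_eq_top {ε : ℝ} (hε : 0 < ε) :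
    ∫⁻ u in Ioo 0 ε, ENNReal.ofReal u⁻¹ = ⊤ := by
  by_contra h
  have hnonneg : 0 ≤ᵐ[volume.restrict (Ioo 0 ε)] fun u : ℝ => u⁻¹ := by
    filter_upwards [ae_restrict_mem measurableSet_Ioo] with u hu
    exact inv_nonneg.2 hu.1.le
  have hint : IntervalIntegrable (fun u : ℝ => u⁻¹) volume 0 ε :=
    (intervalIntegrable_iff_integrableOn_Ioo_of_le hε.le).2 <|
      (lintegral_ofReal_ne_top_iff_integrable measurable_inv.aestronglyMeasurable hnonneg).1 h
  simp [intervalIntegrable_inv_iff, hε.ne, uIcc_of_le hε.le] at hint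
  linarith

lemma lintegral_ofReal_inv_mul_eq_top {f : ℝ → ℝ} {c ε : ℝ} (hc : 0 < c) (hε : 0 < ε)
    (hf : ∀ u ∈ Ioo 0 ε, c ≤ f u) :
    ∫⁻ u in Ioi 0, ENNReal.ofReal (u⁻¹ * f u) = ⊤ := by
  refine top_le_iff.1 ?_
  calc ⊤ = ENNReal.ofReal c * ∫⁻ u in Ioo 0 ε, ENNReal.ofReal u⁻¹ := by
        rw [lintegral_ofReal_inv_Ioo_zero_eq_top hε, ENNReal.mul_top (by simpa using hc)]
    _ = ∫⁻ u in Ioo 0 ε, ENNReal.ofReal (u⁻¹ * c) := by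
        rw [← lintegral_const_mul _ measurable_inv.ennreal_ofReal]
        refine lintegral_congr fun u => ?_
        rw [← ENNReal.ofReal_mul hc.le, mul_comm]
    _ ≤ ∫⁻ u in Ioo 0 ε, ENNReal.ofReal (u⁻¹ * f u) :=
        setLIntegral_mono' measurableSet_Ioo fun u hu =>
          ENNReal.ofReal_le_ofReal (mul_le_mul_of_nonneg_left (hf u hu) (inv_nonneg.2 hu.1.le))
    _ ≤ ∫⁻ u in Ioi 0, ENNReal.ofReal (u⁻¹ * f u) :=
        lintegral_mono_set fun u hu => hu.1

lemma betaFn_pos {a b : ℝ} (ha : 0 < a) (hb : 0 < b) : 0 < betaFn a b :=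
  div_pos (mul_pos (Real.Gamma_pos_of_pos ha) (Real.Gamma_pos_of_pos hb))
    (Real.Gamma_pos_of_pos (add_pos ha hb))

lemma le_piRSB_of_mem_Ioo {a b u : ℝ} (ha : a ∈ Ioc 0 1) (hb : 0 < b) (hu : u ∈ Ioo 0 1) :
    1 / betaFn a b * 2⁻¹ * 2 ^ (-(a + b)) ≤ piRSB a b u := by
  obtain ⟨ha0, ha1⟩ := ha
  obtain ⟨hu0, hu1⟩ := hu
  have hB := betaFn_pos ha0 hb
  have hlog_pos : 0 < Real.log (1 + u) := Real.log_pos (by linarith)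
  have hlog_le : Real.log (1 + u) ≤ 1 := by
    linarith [Real.log_le_sub_one_of_pos (by linarith : (0 : ℝ) < 1 + u)]
  calc 1 / betaFn a b * 2⁻¹ * 2 ^ (-(a + b)) = 1 / betaFn a b * 1 * 2⁻¹ * 2 ^ (-(a + b)) := by
        ring
    _ ≤ piRSB a b u := by
        unfold piRSB
        gcongr ?_ * ?_ * ?_ * ?_
        · exact Real.one_le_rpow_of_pos_of_le_one_of_nonpos hlog_pos hlog_le (by linarith)
        · exact inv_anti₀ (by positivity) (by linarith)
        · exact Real.rpow_le_rpow_of_nonpos (by linarith) (by linarith) (by linarith)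

/-- For all `a ∈ (0,1]` and `b > 0`, the negative first moment of the RSB
distribution is infinite: `∫₀^∞ u⁻¹ π_RSB(u; a, b) du = ∞`. -/
theorem rsb_neg_moment_infinite (a b : ℝ) (ha : a ∈ Set.Ioc (0 : ℝ) 1) (hb : 0 < b) :
    ∫⁻ u in Set.Ioi (0 : ℝ), ENNReal.ofReal (u⁻¹ * piRSB a b u) = ⊤ :=
  lintegral_ofReal_inv_mul_eq_top (by have := betaFn_pos ha.1 hb; positivity) one_pos
    fun _ hu => le_piRSB_of_mem_Ioo ha hb hu
end

section
/- Let a ∈ (0,1], b > 0, and define g(u) = u^{a-1} (1+u)^{-a} (1 + log(1+u))^{-(1+b)} for u > 0. Let π : (0,∞) → (0,∞) be measurable with (1/M) g(u) ≤ π(u) ≤ M g(u) for all u > 0 and some M > 0, and define f_π(y; z) = ∫₀^∞ π(u) · (e^z u)^y e^{-e^z u} / y! du. Then there exists a constant C > 0 such that for all integers y ≥ 1 and all z ∈ ℝ, f_π(y; z) / f_π(y; 0) ≤ C (1 + |z|)^{1+b}. -/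
open MeasureTheory Set Filter

/-- The RSB-type reference density shape with `δ = 0`:
`g(u) = u^{a-1} (1+u)^{-a} (1+log(1+u))^{-(1+b)}`. -/
noncomputable def gShape0 (a b u : ℝ) : ℝ :=
  u ^ (a - 1) * (1 + u) ^ (-a) * (1 + Real.log (1 + u)) ^ (-(1 + b))

/-- The Poisson mixture mass function
`f_π(y; z) = ∫₀^∞ π(u) (e^z u)^y e^{-e^z u} / y! du`. -/
noncomputable def poissonMix (p : ℝ → ℝ) (y : ℕ) (z : ℝ) : ℝ :=
  ∫ u in Set.Ioi (0 : ℝ),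
    p u * ((Real.exp z * u) ^ y * Real.exp (-(Real.exp z * u)) / (Nat.factorial y : ℝ))

/-!
Substituting `v = e^z u` gives `f_p(y; z) = ∫ e^{-z} p(e^{-z} v) Po(y | v) dv`. For `a ≥ 0` the
rescaled shape `T g(T v)` is dominated by `(1 + |log T|)^{1+b} h(v)`, where the envelope
`h = gShape0 0 b`, `h(v) = v⁻¹ (1 + log (1 + v))^{-(1+b)}`, no longer depends on `T`; hence
`f_p(y; z) ≤ M (1 + |z|)^{1+b} f_h(y; 0)`. On `(1, ∞)` the envelope is at most `2 g ≤ 2 M p`,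
and on `(0, 1]` its contribution is at most `1 / y!` because `y ≥ 1`. Finally `1 / y!` is itself
a multiple of a lower bound for `f_p(y; 0)`, obtained from `u ∈ (1, 2]`.
-/

open Real

lemma one_add_log_one_add_pos {u : ℝ} (hu : 0 ≤ u) : 0 < 1 + log (1 + u) := by
  have := log_nonneg (by linarith : (1 : ℝ) ≤ 1 + u)
  linarith

lemma log_one_add_le_abs_log_add {T v : ℝ} (hT : 0 < T) (hv : 0 ≤ v) :
    log (1 + v) ≤ |log T| + log (1 + T * v) := by
  have hTv : 0 < 1 + T * v := by positivity
  rcases le_total T 1 with hT₁ | hT₁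
  · have h : 1 + v ≤ T⁻¹ * (1 + T * v) := by
      rw [mul_add, mul_one, inv_mul_cancel_left₀ hT.ne']
      linarith [one_le_inv₀ hT |>.2 hT₁]
    have := log_le_log (by linarith) h
    rw [log_mul (inv_ne_zero hT.ne') hTv.ne', log_inv] at this
    linarith [neg_le_abs (log T)]
  · have := log_le_log (by linarith) (by nlinarith : 1 + v ≤ 1 + T * v)
    linarith [abs_nonneg (log T)]

lemma rpow_neg_le_mul_rpow_neg {X Y L c : ℝ} (hX : 0 < X) (hY : 0 < Y) (hL : 0 < L)
    (hc : 0 ≤ c) (h : X ≤ L * Y) : Y ^ (-c) ≤ L ^ c * X ^ (-c) :=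
  calc Y ^ (-c) = L ^ c * (L * Y) ^ (-c) := by
        rw [mul_rpow hL.le hY.le, ← mul_assoc, ← rpow_add hL, add_neg_cancel, rpow_zero,
          one_mul]
    _ ≤ L ^ c * X ^ (-c) :=
        mul_le_mul_of_nonneg_left (rpow_le_rpow_of_nonpos hX h (neg_nonpos.2 hc)) (by positivity)

namespace gShape0

variable {a b u : ℝ}

lemma pos (hu : 0 < u) : 0 < gShape0 a b u := by
  have := one_add_log_one_add_pos hu.le
  unfold gShape0
  positivity

lemma zero_left (b u : ℝ) : gShape0 0 b u = u⁻¹ * (1 + log (1 + u)) ^ (-(1 + b)) := by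
  simp [gShape0, rpow_neg_one]

lemma le_rpow (ha : 0 ≤ a) (hb : 0 ≤ 1 + b) (hu : 0 < u) : gShape0 a b u ≤ u ^ (a - 1) := by
  have h₁ : (1 + u) ^ (-a) ≤ 1 := rpow_le_one_of_one_le_of_nonpos (by linarith) (by linarith)
  have h₂ : (1 + log (1 + u)) ^ (-(1 + b)) ≤ 1 :=
    rpow_le_one_of_one_le_of_nonpos (by linarith [log_nonneg (by linarith : (1 : ℝ) ≤ 1 + u)])
      (by linarith)
  have := one_add_log_one_add_pos hu.le
  unfold gShape0
  calc u ^ (a - 1) * (1 + u) ^ (-a) * (1 + log (1 + u)) ^ (-(1 + b))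
      ≤ u ^ (a - 1) * 1 * 1 := by gcongr
    _ = u ^ (a - 1) := by ring

lemma le_zero_left (ha : 0 ≤ a) (hu : 0 < u) : gShape0 a b u ≤ gShape0 0 b u := by
  have hu₁ : 0 < 1 + u := by linarith
  have hfrac : u ^ a * (1 + u) ^ (-a) ≤ 1 := by
    rw [rpow_neg hu₁.le, ← div_eq_mul_inv, div_le_one (rpow_pos_of_pos hu₁ _)]
    exact rpow_le_rpow hu.le (by linarith) ha
  have hsplit : u ^ (a - 1) * (1 + u) ^ (-a) = u⁻¹ * (u ^ a * (1 + u) ^ (-a)) := by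
    rw [rpow_sub_one hu.ne']
    ring
  have := one_add_log_one_add_pos hu.le
  rw [zero_left, gShape0, hsplit]
  gcongr
  exact mul_le_of_le_one_right (inv_nonneg.2 hu.le) hfrac

lemma zero_left_le_two_mul (ha₀ : 0 ≤ a) (ha₁ : a ≤ 1) (hu : 1 ≤ u) :
    gShape0 0 b u ≤ 2 * gShape0 a b u := by
  have hu₀ : 0 < u := by linarith
  have hu₁ : 0 < 1 + u := by linarith
  have hpow : (1 + u) ^ a ≤ 2 * u ^ a :=
    calc (1 + u) ^ a ≤ (2 * u) ^ a := rpow_le_rpow hu₁.le (by linarith) ha₀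
      _ = 2 ^ a * u ^ a := mul_rpow (by norm_num) hu₀.le
      _ ≤ 2 ^ (1 : ℝ) * u ^ a := by gcongr; norm_num
      _ = 2 * u ^ a := by rw [rpow_one]
  have hinv : u⁻¹ ≤ 2 * (u ^ (a - 1) * (1 + u) ^ (-a)) := by
    rw [rpow_sub_one hu₀.ne', rpow_neg hu₁.le]
    rw [show 2 * (u ^ a / u * ((1 + u) ^ a)⁻¹) = 2 * u ^ a / (1 + u) ^ a * u⁻¹ by ring,
      le_mul_iff_one_le_left (inv_pos.2 hu₀), one_le_div (rpow_pos_of_pos hu₁ _)]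
    exact hpow
  have := one_add_log_one_add_pos hu₀.le
  rw [zero_left, gShape0, ← mul_assoc]
  gcongr

lemma const_le_of_mem_Ioc {v : ℝ} (ha₀ : 0 ≤ a) (ha₁ : a ≤ 1) (hb : 0 ≤ 1 + b)
    (hv : v ∈ Ioc 1 2) : 6⁻¹ * (1 + log 3) ^ (-(1 + b)) ≤ gShape0 a b v := by
  obtain ⟨hv₁, hv₂⟩ := hv
  have hv₀ : 0 < v := by linarith
  have h₁ : 2⁻¹ ≤ v ^ (a - 1) :=
    calc (2 : ℝ)⁻¹ ≤ v⁻¹ := inv_anti₀ hv₀ hv₂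
      _ = v ^ (-1 : ℝ) := (rpow_neg_one v).symm
      _ ≤ v ^ (a - 1) := rpow_le_rpow_of_exponent_le hv₁.le (by linarith)
  have h₂ : 3⁻¹ ≤ (1 + v) ^ (-a) :=
    calc (3 : ℝ)⁻¹ ≤ (1 + v)⁻¹ := inv_anti₀ (by linarith) (by linarith)
      _ = (1 + v) ^ (-1 : ℝ) := (rpow_neg_one _).symm
      _ ≤ (1 + v) ^ (-a) := rpow_le_rpow_of_exponent_le (by linarith) (by linarith)
  have h₃ : (1 + log 3) ^ (-(1 + b)) ≤ (1 + log (1 + v)) ^ (-(1 + b)) :=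
    rpow_le_rpow_of_nonpos (one_add_log_one_add_pos hv₀.le)
      (by linarith [log_le_log (by linarith : (0 : ℝ) < 1 + v) (by linarith : 1 + v ≤ 3)])
      (by linarith)
  calc 6⁻¹ * (1 + log 3) ^ (-(1 + b)) = 2⁻¹ * 3⁻¹ * (1 + log 3) ^ (-(1 + b)) := by norm_num
    _ ≤ gShape0 a b v := by unfold gShape0; gcongr

end gShape0

lemma mul_gShape0_zero_left_mul_le {b T v : ℝ} (hb : 0 ≤ 1 + b) (hT : 0 < T) (hv : 0 < v) :
    T * gShape0 0 b (T * v) ≤ (1 + |log T|) ^ (1 + b) * gShape0 0 b v := by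
  have hX := one_add_log_one_add_pos hv.le
  have hY := one_add_log_one_add_pos (mul_pos hT hv).le
  have hXY : 1 + log (1 + v) ≤ (1 + |log T|) * (1 + log (1 + T * v)) := by
    nlinarith [log_one_add_le_abs_log_add hT hv.le, abs_nonneg (log T),
      log_nonneg (by nlinarith : (1 : ℝ) ≤ 1 + T * v)]
  have hinv : T * (T * v)⁻¹ = v⁻¹ := by rw [mul_inv, mul_inv_cancel_left₀ hT.ne']
  rw [gShape0.zero_left, gShape0.zero_left, ← mul_assoc, hinv, mul_left_comm]
  gcongr
  exact rpow_neg_le_mul_rpow_neg hX hY (by positivity) hb hXY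

lemma mul_gShape0_mul_le {a b T v : ℝ} (ha : 0 ≤ a) (hb : 0 ≤ 1 + b) (hT : 0 < T)
    (hv : 0 < v) :
    T * gShape0 a b (T * v) ≤ (1 + |log T|) ^ (1 + b) * gShape0 0 b v :=
  (mul_le_mul_of_nonneg_left (gShape0.le_zero_left ha (mul_pos hT hv)) hT.le).trans
    (mul_gShape0_zero_left_mul_le hb hT hv)

/-- `Po(y | v)`, so that `poissonMix p y z = ∫ u in Ioi 0, p u * poissonWeight y (exp z * u)`
holds by `rfl`. -/
noncomputable def poissonWeight (y : ℕ) (v : ℝ) : ℝ :=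
  v ^ y * exp (-v) / (Nat.factorial y : ℝ)

section poissonWeight

variable {y : ℕ} {v : ℝ}

lemma poissonWeight_nonneg (hv : 0 ≤ v) : 0 ≤ poissonWeight y v := by
  unfold poissonWeight; positivity

lemma continuous_poissonWeight (y : ℕ) : Continuous (poissonWeight y) := by
  unfold poissonWeight; fun_prop

lemma inv_mul_poissonWeight_le (hy : 1 ≤ y) (hv : v ∈ Ioc 0 1) :
    v⁻¹ * poissonWeight y v ≤ (y.factorial : ℝ)⁻¹ := by
  obtain ⟨hv₀, hv₁⟩ := hv
  obtain ⟨m, rfl⟩ := Nat.exists_eq_add_of_le' hy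
  have hle : v ^ m * exp (-v) ≤ 1 :=
    mul_le_one₀ (pow_le_one₀ hv₀.le hv₁) (exp_pos _).le (exp_le_one_iff.2 (by linarith))
  have heq : v⁻¹ * poissonWeight (m + 1) v = v ^ m * exp (-v) / (m + 1).factorial := by
    rw [poissonWeight, pow_succ]
    field_simp
  rw [heq, inv_eq_one_div]
  exact div_le_div_of_nonneg_right hle (by positivity)

lemma le_poissonWeight_of_mem_Ioc (hv : v ∈ Ioc 1 2) :
    exp (-2) / (y.factorial : ℝ) ≤ poissonWeight y v := by
  obtain ⟨hv₁, hv₂⟩ := hv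
  have hexp : exp (-2) ≤ exp (-v) := exp_le_exp.2 (by linarith)
  have hpow : 1 ≤ v ^ y := one_le_pow₀ hv₁.le
  unfold poissonWeight
  gcongr
  nlinarith [exp_pos (-v)]

end poissonWeight

section integrals

variable {y : ℕ}

lemma integrableOn_mul_poissonWeight {q : ℝ → ℝ} {s K : ℝ}
    (hq : AEStronglyMeasurable q (volume.restrict (Ioi 0))) (hs : 0 < s + y)
    (hbound : ∀ u, 0 < u → ‖q u‖ ≤ K * u ^ (s - 1)) :
    IntegrableOn (fun u => q u * poissonWeight y u) (Ioi 0) := by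
  refine Integrable.mono' ((GammaIntegral_convergent hs).const_mul (K / y.factorial))
    (hq.mul (continuous_poissonWeight y).aestronglyMeasurable) ?_
  filter_upwards [ae_restrict_mem measurableSet_Ioi] with u hu
  have hw := poissonWeight_nonneg (y := y) (le_of_lt hu)
  have hpow : u ^ (s - 1) * u ^ y = u ^ (s + y - 1) := by
    rw [← rpow_natCast, ← rpow_add hu]; ring_nf
  calc ‖q u * poissonWeight y u‖ = ‖q u‖ * poissonWeight y u := by
        rw [norm_mul, Real.norm_of_nonneg hw]
    _ ≤ K * u ^ (s - 1) * poissonWeight y u := mul_le_mul_of_nonneg_right (hbound u hu) hw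
    _ = K / y.factorial * (exp (-u) * u ^ (s + y - 1)) := by
        rw [poissonWeight, ← hpow]; ring

lemma integrableOn_mul_poissonWeight_of_norm_le_gShape0 {q : ℝ → ℝ} {a b K : ℝ}
    (hq : AEStronglyMeasurable q (volume.restrict (Ioi 0))) (hay : 0 < a + y) (ha : 0 ≤ a)
    (hb : 0 ≤ 1 + b) (hbound : ∀ u, 0 < u → ‖q u‖ ≤ K * gShape0 a b u) :
    IntegrableOn (fun u => q u * poissonWeight y u) (Ioi 0) := by
  refine integrableOn_mul_poissonWeight (K := K) hq hay fun u hu => (hbound u hu).trans ?_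
  have hK : 0 ≤ K := nonneg_of_mul_nonneg_left ((norm_nonneg _).trans (hbound u hu))
    (gShape0.pos hu)
  exact mul_le_mul_of_nonneg_left (gShape0.le_rpow ha hb hu) hK

lemma integrableOn_gShape0_zero_left_mul_poissonWeight {b : ℝ} (hb : 0 ≤ 1 + b) (hy : 1 ≤ y) :
    IntegrableOn (fun v => gShape0 0 b v * poissonWeight y v) (Ioi 0) :=
  integrableOn_mul_poissonWeight_of_norm_le_gShape0 (K := 1) (by unfold gShape0; fun_prop)
    (by simp; omega) le_rfl hb fun u hu => by rw [one_mul, norm_of_nonneg (gShape0.pos hu).le]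

lemma poissonMix_eq_integral (p : ℝ → ℝ) (y : ℕ) (z : ℝ) :
    poissonMix p y z = ∫ v in Ioi 0, exp (-z) * p (exp (-z) * v) * poissonWeight y v := by
  let F := fun v => p (exp (-z) * v) * poissonWeight y v
  calc poissonMix p y z = ∫ u in Ioi 0, F (exp z * u) := by
        refine setIntegral_congr_fun measurableSet_Ioi fun u _ => ?_
        simp only [F, ← mul_assoc, ← exp_add, neg_add_cancel, exp_zero, one_mul]
        rfl
    _ = ∫ v in Ioi 0, exp (-z) * p (exp (-z) * v) * poissonWeight y v := by
        rw [integral_comp_mul_left_Ioi F 0 (exp_pos z), mul_zero, smul_eq_mul, ← exp_neg,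
          ← integral_const_mul]
        simp only [F, mul_assoc]

lemma poissonMix_zero (p : ℝ → ℝ) (y : ℕ) :
    poissonMix p y 0 = ∫ u in Ioi 0, p u * poissonWeight y u := by
  simp [poissonMix_eq_integral]

lemma setIntegral_mul_poissonWeight_le_of_subset {q : ℝ → ℝ} {s : Set ℝ}
    (hq : IntegrableOn (fun v => q v * poissonWeight y v) (Ioi 0))
    (hq₀ : ∀ v, 0 < v → 0 ≤ q v) (hs : s ⊆ Ioi 0) :
    ∫ v in s, q v * poissonWeight y v ≤ ∫ v in Ioi 0, q v * poissonWeight y v := by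
  refine setIntegral_mono_set hq ?_ hs.eventuallyLE
  filter_upwards [ae_restrict_mem measurableSet_Ioi] with v hv
  exact mul_nonneg (hq₀ v hv) (poissonWeight_nonneg (le_of_lt hv))

lemma inv_factorial_le_mul_poissonMix_zero {q : ℝ → ℝ} {c : ℝ} (hc₀ : 0 < c)
    (hq : IntegrableOn (fun v => q v * poissonWeight y v) (Ioi 0))
    (hq₀ : ∀ v, 0 < v → 0 ≤ q v) (hc : ∀ v ∈ Ioc (1 : ℝ) 2, c ≤ q v) :
    (y.factorial : ℝ)⁻¹ ≤ exp 2 / c * poissonMix q y 0 := by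
  rw [← div_le_iff₀' (by positivity), div_div_eq_mul_div, poissonMix_zero]
  have hsub : Ioc (1 : ℝ) 2 ⊆ Ioi 0 := fun v hv => zero_lt_one.trans hv.1
  calc (y.factorial : ℝ)⁻¹ * c / exp 2
      = ∫ _ in Ioc (1 : ℝ) 2, c * (exp (-2) / y.factorial) := by
        simp [exp_neg]; field_simp; norm_num
    _ ≤ ∫ v in Ioc (1 : ℝ) 2, q v * poissonWeight y v :=
        setIntegral_mono_on (integrableOn_const measure_Ioc_lt_top.ne) (hq.mono_set hsub)
          measurableSet_Ioc fun v hv => mul_le_mul (hc v hv) (le_poissonWeight_of_mem_Ioc hv)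
            (by positivity) (hq₀ v (hsub hv))
    _ ≤ ∫ v in Ioi 0, q v * poissonWeight y v :=
        setIntegral_mul_poissonWeight_le_of_subset hq hq₀ hsub

lemma setIntegral_Ioc_gShape0_zero_left_mul_poissonWeight_le {b : ℝ} (hb : 0 ≤ 1 + b)
    (hy : 1 ≤ y) :
    ∫ v in Ioc 0 1, gShape0 0 b v * poissonWeight y v ≤ (y.factorial : ℝ)⁻¹ :=
  calc ∫ v in Ioc 0 1, gShape0 0 b v * poissonWeight y v
      ≤ ∫ _ in Ioc (0 : ℝ) 1, (y.factorial : ℝ)⁻¹ := by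
        refine setIntegral_mono_on
          ((integrableOn_gShape0_zero_left_mul_poissonWeight hb hy).mono_set Ioc_subset_Ioi_self)
          (integrableOn_const measure_Ioc_lt_top.ne) measurableSet_Ioc fun v hv => ?_
        have hg : gShape0 0 b v ≤ v⁻¹ := by
          simpa [rpow_neg_one] using gShape0.le_rpow le_rfl hb hv.1
        exact (mul_le_mul_of_nonneg_right hg (poissonWeight_nonneg hv.1.le)).trans
          (inv_mul_poissonWeight_le hy hv)
    _ = (y.factorial : ℝ)⁻¹ := by simp

lemma setIntegral_Ioi_one_gShape0_zero_left_mul_poissonWeight_le {a b M : ℝ} {q : ℝ → ℝ}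
    (ha₀ : 0 ≤ a) (ha₁ : a ≤ 1) (hb : 0 ≤ 1 + b) (hM : 0 ≤ M) (hy : 1 ≤ y)
    (hq : IntegrableOn (fun v => q v * poissonWeight y v) (Ioi 0))
    (hq₀ : ∀ v, 0 < v → 0 ≤ q v) (hgq : ∀ v, 1 < v → gShape0 a b v ≤ M * q v) :
    ∫ v in Ioi 1, gShape0 0 b v * poissonWeight y v ≤ 2 * M * poissonMix q y 0 := by
  have hsub : Ioi (1 : ℝ) ⊆ Ioi 0 := Ioi_subset_Ioi zero_le_one
  rw [poissonMix_zero]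
  calc ∫ v in Ioi 1, gShape0 0 b v * poissonWeight y v
      ≤ ∫ v in Ioi 1, 2 * M * (q v * poissonWeight y v) := by
        refine setIntegral_mono_on
          ((integrableOn_gShape0_zero_left_mul_poissonWeight hb hy).mono_set hsub)
          ((hq.mono_set hsub).const_mul _) measurableSet_Ioi fun v hv => ?_
        have hw := poissonWeight_nonneg (y := y) (zero_le_one.trans hv.le)
        calc gShape0 0 b v * poissonWeight y v ≤ 2 * gShape0 a b v * poissonWeight y v :=
              mul_le_mul_of_nonneg_right (gShape0.zero_left_le_two_mul ha₀ ha₁ hv.le) hw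
          _ ≤ 2 * (M * q v) * poissonWeight y v := by gcongr; exact hgq v hv
          _ = 2 * M * (q v * poissonWeight y v) := by ring
    _ = 2 * M * ∫ v in Ioi 1, q v * poissonWeight y v := integral_const_mul _ _
    _ ≤ 2 * M * ∫ v in Ioi 0, q v * poissonWeight y v :=
        mul_le_mul_of_nonneg_left (setIntegral_mul_poissonWeight_le_of_subset hq hq₀ hsub)
          (by positivity)

lemma poissonMix_gShape0_zero_left_le {a b M : ℝ} {q : ℝ → ℝ}
    (ha₀ : 0 ≤ a) (ha₁ : a ≤ 1) (hb : 0 ≤ 1 + b) (hM : 0 ≤ M) (hy : 1 ≤ y)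
    (hq : IntegrableOn (fun v => q v * poissonWeight y v) (Ioi 0))
    (hq₀ : ∀ v, 0 < v → 0 ≤ q v) (hgq : ∀ v, 1 < v → gShape0 a b v ≤ M * q v) :
    poissonMix (gShape0 0 b) y 0 ≤ (y.factorial : ℝ)⁻¹ + 2 * M * poissonMix q y 0 := by
  have hint := integrableOn_gShape0_zero_left_mul_poissonWeight hb hy
  rw [poissonMix_zero, ← Ioc_union_Ioi_eq_Ioi zero_le_one,
    setIntegral_union (Ioc_disjoint_Ioi le_rfl) measurableSet_Ioi
      (hint.mono_set Ioc_subset_Ioi_self) (hint.mono_set (Ioi_subset_Ioi zero_le_one))]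
  exact add_le_add (setIntegral_Ioc_gShape0_zero_left_mul_poissonWeight_le hb hy)
    (setIntegral_Ioi_one_gShape0_zero_left_mul_poissonWeight_le ha₀ ha₁ hb hM hy hq hq₀ hgq)

lemma poissonMix_le_mul_poissonMix_gShape0_zero_left {a b M : ℝ} {p : ℝ → ℝ}
    (ha : 0 ≤ a) (hb : 0 ≤ 1 + b) (hM : 0 ≤ M) (hp₀ : ∀ u, 0 < u → 0 ≤ p u)
    (hup : ∀ u, 0 < u → p u ≤ M * gShape0 a b u) (hy : 1 ≤ y) (z : ℝ) :
    poissonMix p y z ≤ M * (1 + |z|) ^ (1 + b) * poissonMix (gShape0 0 b) y 0 := by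
  rw [poissonMix_eq_integral, poissonMix_zero, ← integral_const_mul]
  refine integral_mono_of_nonneg ?_
    ((integrableOn_gShape0_zero_left_mul_poissonWeight hb hy).const_mul _) ?_
  all_goals
    filter_upwards [ae_restrict_mem measurableSet_Ioi] with v hv
    have hTv : 0 < exp (-z) * v := mul_pos (exp_pos _) hv
    have hw := poissonWeight_nonneg (y := y) (le_of_lt hv)
  · have := hp₀ _ hTv
    positivity
  · have hscale := mul_gShape0_mul_le (b := b) ha hb (exp_pos (-z)) hv
    rw [log_exp, abs_neg] at hscale
    calc exp (-z) * p (exp (-z) * v) * poissonWeight y v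
        ≤ M * (exp (-z) * gShape0 a b (exp (-z) * v)) * poissonWeight y v := by
          rw [mul_left_comm]; gcongr; exact hup _ hTv
      _ ≤ M * ((1 + |z|) ^ (1 + b) * gShape0 0 b v) * poissonWeight y v := by gcongr
      _ = M * (1 + |z|) ^ (1 + b) * (gShape0 0 b v * poissonWeight y v) := by ring

end integrals

/-- If `p` is comparable to the RSB-type shape `gShape0 a b`, then the ratio
`f_p(y; z)/f_p(y; 0)` grows at most like `(1+|z|)^{1+b}`, uniformly in `y ≥ 1`. -/
theorem poissonMix_ratio_polylog_bound (a b M : ℝ) (ha : a ∈ Set.Ioc (0 : ℝ) 1)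
    (hb : 0 < b) (hM : 0 < M) (p : ℝ → ℝ) (hmeas : Measurable p)
    (hlow : ∀ u : ℝ, 0 < u → gShape0 a b u / M ≤ p u)
    (hup : ∀ u : ℝ, 0 < u → p u ≤ M * gShape0 a b u) :
    ∃ C : ℝ, 0 < C ∧ ∀ y : ℕ, 1 ≤ y → ∀ z : ℝ,
      poissonMix p y z / poissonMix p y 0 ≤ C * (1 + |z|) ^ (1 + b) := by
  obtain ⟨ha₀, ha₁⟩ := ha
  have hb' : 0 ≤ 1 + b := by linarith
  set c := 6⁻¹ * (1 + log 3) ^ (-(1 + b))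
  refine ⟨M ^ 2 * (exp 2 / c + 2), by positivity, fun y hy z => ?_⟩
  have hp₀ : ∀ u, 0 < u → 0 ≤ p u := fun u hu =>
    (div_nonneg (gShape0.pos hu).le hM.le).trans (hlow u hu)
  have hint := integrableOn_mul_poissonWeight_of_norm_le_gShape0 (y := y)
    hmeas.aestronglyMeasurable (by positivity) ha₀.le hb' fun u hu =>
      (norm_of_nonneg (hp₀ u hu)).trans_le (hup u hu)
  have hfactorial : (y.factorial : ℝ)⁻¹ ≤ exp 2 / (c / M) * poissonMix p y 0 :=
    inv_factorial_le_mul_poissonMix_zero (by positivity) hint hp₀ fun v hv =>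
      (div_le_div_of_nonneg_right (gShape0.const_le_of_mem_Ioc ha₀.le ha₁ hb' hv) hM.le).trans
        (hlow v (zero_lt_one.trans hv.1))
  have henvelope := poissonMix_gShape0_zero_left_le ha₀.le ha₁ hb' hM.le hy hint hp₀
    fun v hv => (div_le_iff₀' hM).1 (hlow v (zero_lt_one.trans hv))
  have hpos : 0 < poissonMix p y 0 := pos_of_mul_pos_right
    ((inv_pos.2 (Nat.cast_pos.2 y.factorial_pos)).trans_le hfactorial) (by positivity)
  rw [div_le_iff₀ hpos]
  calc poissonMix p y z
      ≤ M * (1 + |z|) ^ (1 + b) * poissonMix (gShape0 0 b) y 0 :=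
        poissonMix_le_mul_poissonMix_gShape0_zero_left ha₀.le hb' hM.le hp₀ hup hy z
    _ ≤ M * (1 + |z|) ^ (1 + b) *
          (exp 2 / (c / M) * poissonMix p y 0 + 2 * M * poissonMix p y 0) := by
        gcongr
        exact henvelope.trans (by gcongr)
    _ = M ^ 2 * (exp 2 / c + 2) * (1 + |z|) ^ (1 + b) * poissonMix p y 0 := by
        field_simp
end
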